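/- arXiv:1611.01262 — 2 statements merged into one kernel-verified Lean document; each statement's English description precedes it below -/
import Mathlib

section
/- Let χ : {1,...,n} → {ℓ,r} and ε : {1,...,n} → I with I an index set, and let 𝒥 be the set of maximal ε-monochromatic χ-intervals. If π ∈ BNC(χ) is such that every block of π is ε-monochromatic (π ≤ ε), then there exists some J ∈ 𝒥 which is isolated in π, i.e., π refines the two-block partition {J, Jᶜ} (interpreted appropriately if J = {1,...,n}). -/
noncomputable def chiKey {n : ℕ} (χ : Fin n → Bool) (i : Fin n) : Lex (ℕ × ℕ) :=
  toLex (if χ i then 0 else 1, if χ i then (i : ℕ) else n - (i : ℕ))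

/-- The permutation `s_χ` listing `χ⁻¹(ℓ)` increasingly and then `χ⁻¹(r)` decreasingly. -/
noncomputable def sChi {n : ℕ} (χ : Fin n → Bool) : Equiv.Perm (Fin n) :=
  Tuple.sort (chiKey χ)

/-- The order `≺_χ`. -/
def ltChi {n : ℕ} (χ : Fin n → Bool) (i j : Fin n) : Prop :=
  (sChi χ).symm i < (sChi χ).symm j

/-- `I` is a `χ`-interval: an interval for the order `≺_χ`. -/
def IsChiInterval {n : ℕ} (χ : Fin n → Bool) (I : Set (Fin n)) : Prop :=
  ∀ a b c : Fin n, a ∈ I → c ∈ I → ltChi χ a b → ltChi χ b c → b ∈ I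

/-- `I` is `ε`-monochromatic: `ε` is constant on `I`. -/
def IsMono {n : ℕ} {ι : Type*} (ε : Fin n → ι) (I : Set (Fin n)) : Prop :=
  ∀ a ∈ I, ∀ b ∈ I, ε a = ε b

/-- `J` is a maximal `ε`-monochromatic `χ`-interval. -/
def IsMaxMono {n : ℕ} {ι : Type*} (χ : Fin n → Bool) (ε : Fin n → ι)
    (J : Set (Fin n)) : Prop :=
  J.Nonempty ∧ IsChiInterval χ J ∧ IsMono ε J ∧
    ∀ K : Set (Fin n), IsChiInterval χ K → IsMono ε K → J ⊆ K → J = K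

def IsNonCrossing {n : ℕ} (r : Setoid (Fin n)) : Prop :=
  ∀ a b c d : Fin n, a < b → b < c → c < d → r a c → r b d → r a b

/-- Bi-non-crossing partitions. -/
def IsBNC {n : ℕ} (χ : Fin n → Bool) (π : Setoid (Fin n)) : Prop :=
  IsNonCrossing (π.comap (sChi χ))

/-!
Read through `s_χ`, `χ`-intervals become ordinary intervals of `Fin n` and `π` a non-crossing
partition. If the maximal monochromatic interval of every point is left by some block, then some
block contains an arc `a < b` with `ε` not constant on `[a, b]`; take such an arc with `[a, b]`
minimal and a point `q ∈ [a, b]` with `ε q ≠ ε a`. The maximal monochromatic interval `C` of `q`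
lies in `(a, b)`. An arc `x ~ y` of `π` leaving `C` spans a non-monochromatic interval, so by
minimality `y ∉ [a, b]`; non-crossing then puts `x` in the block of `a`, although
`ε x = ε q ≠ ε a`.
-/

open Set

section LinearOrder

variable {α ι : Type*} [LinearOrder α]

def monoComponent (ε : α → ι) (q : α) : Set α :=
  ordConnectedComponent (ε ⁻¹' {ε q}) q

lemma apply_eq_of_mem_monoComponent {ε : α → ι} {q z : α} (hz : z ∈ monoComponent ε q) :
    ε z = ε q :=
  ordConnectedComponent_subset (s := ε ⁻¹' {ε q}) hz

lemma self_mem_monoComponent (ε : α → ι) (q : α) : q ∈ monoComponent ε q :=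
  self_mem_ordConnectedComponent.2 rfl

instance (ε : α → ι) (q : α) : (monoComponent ε q).OrdConnected :=
  inferInstanceAs (ordConnectedComponent _ q).OrdConnected

lemma ordConnectedComponent_subset_Ioo {s : Set α} {a b q : α} (hq : q ∈ Icc a b)
    (ha : a ∉ s) (hb : b ∉ s) : ordConnectedComponent s q ⊆ Ioo a b := by
  intro z hz
  refine ⟨lt_of_not_ge fun hza => ha (hz ?_), lt_of_not_ge fun hbz => hb (hz ?_)⟩
  · exact mem_uIcc.2 (Or.inr ⟨hza, hq.1⟩)
  · exact mem_uIcc.2 (Or.inl ⟨hq.2, hbz⟩)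

def IsBichromaticArc (ε : α → ι) (ρ : Setoid α) (a b : α) : Prop :=
  a < b ∧ ρ a b ∧ ¬ Icc a b ⊆ ε ⁻¹' {ε a}

variable {ε : α → ι} {ρ : Setoid α}

lemma isBichromaticArc_min_max (hε : ∀ a b, ρ a b → ε a = ε b) {q x y : α}
    (hx : x ∈ monoComponent ε q) (hxy : ρ x y) (hy : y ∉ monoComponent ε q) :
    IsBichromaticArc ε ρ (min x y) (max x y) := by
  have hεx := apply_eq_of_mem_monoComponent hx
  have hεmin : ε (min x y) = ε q := by
    rcases min_choice x y with h | h <;> rw [h]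
    exacts [hεx, (hε x y hxy).symm.trans hεx]
  refine ⟨min_lt_max.2 fun h => hy (h ▸ hx), ?_, ?_⟩
  · rcases le_total x y with h | h
    · simpa [h] using hxy
    · simpa [h] using ρ.symm' hxy
  · rw [hεmin]
    exact fun h => hy (mem_ordConnectedComponent_trans hx h)

lemma notMem_Icc_of_minimalFor {a b x y : α}
    (hmin : MinimalFor (fun p : α × α => IsBichromaticArc ε ρ p.1 p.2) (fun p => Icc p.1 p.2)
      (a, b))
    (hx : x ∈ Ioo a b) (hxy : IsBichromaticArc ε ρ (min x y) (max x y)) : y ∉ Icc a b := by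
  intro hy
  have hab : Icc a b ⊆ Icc (min x y) (max x y) :=
    hmin.2 (j := (min x y, max x y)) hxy
      (Icc_subset_Icc (le_min hx.1.le hy.1) (max_le hx.2.le hy.2))
  have ha := hab ⟨le_rfl, hmin.1.1.le⟩
  have hb := hab ⟨hmin.1.1.le, le_rfl⟩
  simp only [mem_Icc, min_le_iff, le_max_iff] at ha hb
  obtain ⟨hax, hxb⟩ := hx
  rcases ha.1 with ha | ha <;> rcases hb.2 with hb | hb <;> order

variable (hnc : ∀ a b c d, a < b → b < c → c < d → ρ a c → ρ b d → ρ a b)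
include hnc

lemma rel_of_mem_Ioo_of_notMem_Icc {a b x y : α} (hab : ρ a b) (hx : x ∈ Ioo a b)
    (hy : y ∉ Icc a b) (hxy : ρ x y) : ρ a x := by
  rcases not_and_or.1 hy with hya | hby
  · have hya := hnc y a x b (lt_of_not_ge hya) hx.1 hx.2 (ρ.symm' hxy) hab
    exact ρ.trans' (ρ.symm' hya) (ρ.symm' hxy)
  · exact hnc a x b y hx.1 hx.2 (lt_of_not_ge hby) hab hxy

theorem exists_monoComponent_saturated [Finite α] [Nonempty α]
    (hε : ∀ a b, ρ a b → ε a = ε b) :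
    ∃ q, ∀ x y, ρ x y → x ∈ monoComponent ε q → y ∈ monoComponent ε q := by
  by_cases harc : ∃ p : α × α, IsBichromaticArc ε ρ p.1 p.2
  · obtain ⟨⟨a, b⟩, hmin⟩ := exists_minimalFor_of_wellFoundedLT _ (fun p => Icc p.1 p.2) harc
    obtain ⟨hab, hρab, hbich⟩ := hmin.1
    obtain ⟨q, hq, hεq⟩ := not_subset.1 hbich
    replace hεq : ε q ≠ ε a := hεq
    have hεb : ε b = ε a := (hε a b hρab).symm
    refine ⟨q, fun x y hxy hx => by_contra fun hy => ?_⟩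
    have hxab : x ∈ Ioo a b := ordConnectedComponent_subset_Ioo (s := ε ⁻¹' {ε q}) hq hεq.symm
      (hεb.trans_ne hεq.symm) hx
    have hyab := notMem_Icc_of_minimalFor hmin hxab (isBichromaticArc_min_max hε hx hxy hy)
    have hρax := rel_of_mem_Ioo_of_notMem_Icc hnc hρab hxab hyab hxy
    exact hεq ((apply_eq_of_mem_monoComponent hx).symm.trans (hε a x hρax).symm)
  · refine ⟨Classical.arbitrary α, fun x y hxy hx => by_contra fun hy => ?_⟩
    exact harc ⟨(min x y, max x y), isBichromaticArc_min_max hε hx hxy hy⟩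

end LinearOrder

section Chi

variable {n : ℕ} {χ : Fin n → Bool}

lemma isChiInterval_iff_ordConnected {J : Set (Fin n)} :
    IsChiInterval χ J ↔ (sChi χ ⁻¹' J).OrdConnected := by
  constructor
  · refine fun h => ordConnected_of_Ioo fun x hx y hy _ z hz => ?_
    exact h _ (sChi χ z) _ hx hy (by simpa [ltChi] using hz.1) (by simpa [ltChi] using hz.2)
  · intro h a b c ha hc hab hbc
    have hb := h.out (x := (sChi χ).symm a) (by simpa using ha) (y := (sChi χ).symm c)
      (by simpa using hc) ⟨hab.le, hbc.le⟩
    simpa using hb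

lemma isMaxMono_preimage_monoComponent {ι : Type*} (ε : Fin n → ι) (q : Fin n) :
    IsMaxMono χ ε ((sChi χ).symm ⁻¹' monoComponent (ε ∘ sChi χ) q) := by
  set e := sChi χ
  refine ⟨⟨e q, by simpa using self_mem_monoComponent _ q⟩, ?_, ?_, ?_⟩
  · rw [isChiInterval_iff_ordConnected, Equiv.preimage_symm_preimage]
    infer_instance
  · intro a ha b hb
    have hεa := apply_eq_of_mem_monoComponent ha
    have hεb := apply_eq_of_mem_monoComponent hb
    simp only [Function.comp_apply, Equiv.apply_symm_apply] at hεa hεb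
    rw [hεa, hεb]
  · intro K hK hKmono hJK
    have hqK : q ∈ e ⁻¹' K := hJK (by simpa using self_mem_monoComponent _ q)
    have : (e ⁻¹' K).OrdConnected := isChiInterval_iff_ordConnected.1 hK
    have hKJ := subset_ordConnectedComponent hqK fun z hz => hKmono _ hz _ hqK
    exact hJK.antisymm fun k hk => hKJ (by simpa using hk)

end Chi

/-- If `π ∈ BNC(χ)` has all blocks `ε`-monochromatic (`π ≤ ε`), then some maximal
`ε`-monochromatic `χ`-interval `J` is isolated in `π`: no block of `π` meets both
`J` and `Jᶜ`. -/
theorem exists_isolated_maximal_interval {n : ℕ} {ι : Type*} (hn : 1 ≤ n)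
    (χ : Fin n → Bool) (ε : Fin n → ι) (π : Setoid (Fin n)) (hπ : IsBNC χ π)
    (hmono : ∀ a b : Fin n, π a b → ε a = ε b) :
    ∃ J : Set (Fin n), IsMaxMono χ ε J ∧ ∀ a b : Fin n, π a b → (a ∈ J ↔ b ∈ J) := by
  have : Nonempty (Fin n) := ⟨⟨0, hn⟩⟩
  obtain ⟨q, hq⟩ := exists_monoComponent_saturated hπ (ε := ε ∘ sChi χ)
    fun a b h => hmono _ _ h
  refine ⟨_, isMaxMono_preimage_monoComponent ε q, fun a b hab => ?_⟩
  have hab' : π.comap (sChi χ) ((sChi χ).symm a) ((sChi χ).symm b) := by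
    simpa [Setoid.comap_rel] using hab
  exact ⟨hq _ _ hab', hq _ _ (Setoid.symm' _ hab')⟩
end

section
/- Let χ : {1,...,n} → {ℓ,r}, ε : {1,...,n} → I, ι ∈ I. In the formal sum defining ⊤_ι(z₁⋯z_n) = ∑_{i ∈ ε⁻¹(ι)} ∑_{j ∈ ε⁻¹(ι), i ⪯_χ j} ( z_{[i,j]_χᶜ} ⊗ z_{[i,j]_χ} − z_{[i,j)_χᶜ} ⊗ z_{[i,j)_χ} − z_{(i,j]_χᶜ} ⊗ z_{(i,j]_χ} + z_{(i,j)_χᶜ} ⊗ z_{(i,j)_χ} ), every term whose χ-interval splits some maximal ε-monochromatic χ-interval (i.e., whose interval endpoint separates two ≺_χ-consecutive indices with the same ε-value) cancels; the surviving terms are exactly those tensor splittings where the cut falls between two maximal ε-monochromatic χ-intervals of which exactly one is ι-coloured, together with the diagonal terms i = j each contributing −z₁⋯z_n ⊗ 1. -/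
noncomputable instance {n : ℕ} (χ : Fin n → Bool) (i j : Fin n) :
    Decidable (ltChi χ i j) :=
  inferInstanceAs (Decidable ((sChi χ).symm i < (sChi χ).symm j))

/-- `i ⪯_χ j`. -/
def leChi {n : ℕ} (χ : Fin n → Bool) (i j : Fin n) : Prop := ¬ ltChi χ j i

noncomputable instance {n : ℕ} (χ : Fin n → Bool) (i j : Fin n) :
    Decidable (leChi χ i j) := inferInstanceAs (Decidable (¬ _))

/-- The closed `χ`-interval `[i,j]_χ`. -/
noncomputable def IccChi {n : ℕ} (χ : Fin n → Bool) (i j : Fin n) : Finset (Fin n) :=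
  Finset.univ.filter fun k => leChi χ i k ∧ leChi χ k j

/-- The `χ`-interval `[i,j)_χ`. -/
noncomputable def IcoChi {n : ℕ} (χ : Fin n → Bool) (i j : Fin n) : Finset (Fin n) :=
  Finset.univ.filter fun k => leChi χ i k ∧ ltChi χ k j

/-- The `χ`-interval `(i,j]_χ`. -/
noncomputable def IocChi {n : ℕ} (χ : Fin n → Bool) (i j : Fin n) : Finset (Fin n) :=
  Finset.univ.filter fun k => ltChi χ i k ∧ leChi χ k j

/-- The open `χ`-interval `(i,j)_χ`. -/
noncomputable def IooChi {n : ℕ} (χ : Fin n → Bool) (i j : Fin n) : Finset (Fin n) :=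
  Finset.univ.filter fun k => ltChi χ i k ∧ ltChi χ k j

/-- The coefficient of the formal tensor `z_{Sᶜ} ⊗ z_S` in the defining sum of
`⊤_ι(z₁⋯z_n)`: the sum over pairs `i ⪯_χ j` in `ε⁻¹(ι)` of
`[S = [i,j]_χ] − [S = [i,j)_χ] − [S = (i,j]_χ] + [S = (i,j)_χ]`. -/
noncomputable def taurCoeff {n : ℕ} {ι : Type*} [DecidableEq ι]
    (χ : Fin n → Bool) (ε : Fin n → ι) (c : ι) (S : Finset (Fin n)) : ℤ :=
  ∑ p : Fin n × Fin n,
    if ε p.1 = c ∧ ε p.2 = c ∧ leChi χ p.1 p.2 then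
      (if S = IccChi χ p.1 p.2 then 1 else 0) - (if S = IcoChi χ p.1 p.2 then 1 else 0)
        - (if S = IocChi χ p.1 p.2 then 1 else 0) + (if S = IooChi χ p.1 p.2 then 1 else 0)
    else 0

/-!
Transport everything along `sChi χ` to `Fin n` with its usual order. For a nonempty convex `S`,
the term of a pair `(i, j)` splits as a contribution of `i`, according as the upper closure of `S`
is `Ici i` or `Ioi i`, times a contribution of `j`, according as its lower closure is `Iic j` or
`Iio j`; so the coefficient of `S` is a product of a start weight and an end weight, and it is `0`
when `S` is not convex. If `S` is cut between consecutive elements `a ⋖ b`, the relevant closure is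
`Ici b = Ioi a` (or `Iic a = Iio b`), whose weight is `±([ε b = c] - [ε a = c])`: it vanishes when
`ε a = ε b`, and otherwise exactly one of `a`, `b` has colour `c`. A monochromatic interval split
by `S` contains such a cut between consecutive elements of equal colour.
-/

open Finset

section Closure
variable {α : Type*} [LinearOrder α] {s L R : Set α}

theorem Set.Nonempty.upperClosure_eq_of_eq_inter (hs : s.Nonempty) (hL : IsUpperSet L)
    (hR : IsLowerSet R) (h : s = L ∩ R) : ↑(upperClosure s) = L := by
  ext x
  rw [SetLike.mem_coe, mem_upperClosure]
  refine ⟨fun ⟨a, ha, hax⟩ => hL hax (h ▸ ha).1, fun hx => ?_⟩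
  obtain ⟨a, ha⟩ := hs
  rcases le_or_gt a x with hax | hxa
  · exact ⟨a, ha, hax⟩
  · exact ⟨x, h ▸ ⟨hx, hR hxa.le (h ▸ ha).2⟩, le_rfl⟩

theorem Set.Nonempty.lowerClosure_eq_of_eq_inter (hs : s.Nonempty) (hL : IsUpperSet L)
    (hR : IsLowerSet R) (h : s = L ∩ R) : ↑(lowerClosure s) = R := by
  ext x
  rw [SetLike.mem_coe, mem_lowerClosure]
  refine ⟨fun ⟨a, ha, hxa⟩ => hR hxa (h ▸ ha).2, fun hx => ?_⟩
  obtain ⟨a, ha⟩ := hs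
  rcases le_or_gt x a with hxa | hax
  · exact ⟨a, ha, hxa⟩
  · exact ⟨x, h ▸ ⟨hL hax.le (h ▸ ha).1, hx⟩, le_rfl⟩

theorem Set.Nonempty.eq_inter_iff (hs : s.Nonempty) (hL : IsUpperSet L) (hR : IsLowerSet R) :
    s = L ∩ R ↔ s.OrdConnected ∧ ↑(upperClosure s) = L ∧ ↑(lowerClosure s) = R := by
  refine ⟨fun h => ⟨h ▸ hL.ordConnected.inter hR.ordConnected,
    hs.upperClosure_eq_of_eq_inter hL hR h, hs.lowerClosure_eq_of_eq_inter hL hR h⟩, ?_⟩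
  rintro ⟨hc, rfl, rfl⟩
  exact hc.upperClosure_inter_lowerClosure.symm

theorem Set.OrdConnected.upperClosure_eq_Ici_of_covBy (hs : s.OrdConnected) {a b : α}
    (hab : a ⋖ b) (ha : a ∉ s) (hb : b ∈ s) : ↑(upperClosure s) = Set.Ici b := by
  ext x
  rw [SetLike.mem_coe, mem_upperClosure, Set.mem_Ici]
  refine ⟨fun ⟨y, hy, hyx⟩ => ?_, fun hbx => ⟨b, hb, hbx⟩⟩
  by_contra! hxb
  exact ha (hs.out hy hb ⟨hab.le_of_lt (hyx.trans_lt hxb), hab.lt.le⟩)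

theorem Set.OrdConnected.lowerClosure_eq_Iic_of_covBy (hs : s.OrdConnected) {a b : α}
    (hab : a ⋖ b) (ha : a ∈ s) (hb : b ∉ s) : ↑(lowerClosure s) = Set.Iic a := by
  ext x
  rw [SetLike.mem_coe, mem_lowerClosure, Set.mem_Iic]
  refine ⟨fun ⟨y, hy, hxy⟩ => ?_, fun hxa => ⟨a, ha, hxa⟩⟩
  by_contra! hax
  exact hb (hs.out ha hy ⟨hab.lt.le, hab.ge_of_gt (hax.trans_le hxy)⟩)

end Closure

section Cut
variable {α : Type*} [LinearOrder α] [SuccOrder α] [IsSuccArchimedean α]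

theorem Set.OrdConnected.exists_covBy_not_iff {s : Set α} (hs : s.OrdConnected) {p : α → Prop}
    {x y : α} (hx : x ∈ s) (hy : y ∈ s) (hxy : ¬(p x ↔ p y)) :
    ∃ a ∈ s, ∃ b ∈ s, a ⋖ b ∧ ¬(p a ↔ p b) := by
  wlog hle : x ≤ y generalizing x y
  · exact this hy hx (fun h => hxy h.symm) (le_of_not_ge hle)
  by_contra! H
  refine hxy (Succ.rec (P := fun z _ => z ≤ y → (p x ↔ p z)) (fun _ => Iff.rfl) ?_ hle le_rfl)
  intro z hxz ih hzy
  have hz : z ≤ y := (Order.le_succ z).trans hzy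
  by_cases hmax : IsMax z
  · rw [hmax.succ_eq]
    exact ih hz
  · exact (ih hz).trans <| H z (hs.out hx hy ⟨hxz, hz⟩) _
      (hs.out hx hy ⟨hxz.trans (Order.le_succ z), hzy⟩) (Order.covBy_succ_of_not_isMax hmax)

end Cut

section Weights
variable {α ι : Type*} [LinearOrder α] [Fintype α] [DecidableEq ι]

open scoped Classical in
noncomputable def startWeight (ε : α → ι) (c : ι) (U : Set α) : ℤ :=
  ∑ i, if ε i = c then (if U = Set.Ici i then 1 else 0) - (if U = Set.Ioi i then 1 else 0) else 0

open scoped Classical in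
noncomputable def endWeight (ε : α → ι) (c : ι) (D : Set α) : ℤ :=
  ∑ j, if ε j = c then (if D = Set.Iic j then 1 else 0) - (if D = Set.Iio j then 1 else 0) else 0

theorem startWeight_Ici_of_covBy {a b : α} (hab : a ⋖ b) (ε : α → ι) (c : ι) :
    startWeight ε c (Set.Ici b) = (if ε b = c then 1 else 0) - (if ε a = c then 1 else 0) := by
  have hIoi : ∀ i, Set.Ici b = Set.Ioi i ↔ a = i := fun i => by rw [← hab.Ioi_eq, Set.Ioi_inj]
  simp only [startWeight, Set.Ici_inj, hIoi]
  rw [← Fintype.sum_ite_eq b (fun x => if ε x = c then (1 : ℤ) else 0),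
    ← Fintype.sum_ite_eq a (fun x => if ε x = c then (1 : ℤ) else 0), ← Finset.sum_sub_distrib]
  refine Finset.sum_congr rfl fun x _ => ?_
  split_ifs <;> simp_all

theorem endWeight_Iic_of_covBy {a b : α} (hab : a ⋖ b) (ε : α → ι) (c : ι) :
    endWeight ε c (Set.Iic a) = (if ε a = c then 1 else 0) - (if ε b = c then 1 else 0) := by
  have hIio : ∀ j, Set.Iic a = Set.Iio j ↔ b = j := fun j => by rw [← hab.Iio_eq, Set.Iio_inj]
  simp only [endWeight, Set.Iic_inj, hIio]
  rw [← Fintype.sum_ite_eq a (fun x => if ε x = c then (1 : ℤ) else 0),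
    ← Fintype.sum_ite_eq b (fun x => if ε x = c then (1 : ℤ) else 0), ← Finset.sum_sub_distrib]
  refine Finset.sum_congr rfl fun x _ => ?_
  split_ifs <;> simp_all

end Weights

section IntervalCoeff
variable {α ι : Type*} [LinearOrder α] [LocallyFiniteOrder α]

def intervalAltSum (S : Finset α) (i j : α) : ℤ :=
  (if S = Icc i j then 1 else 0) - (if S = Ico i j then 1 else 0)
    - (if S = Ioc i j then 1 else 0) + (if S = Ioo i j then 1 else 0)

open scoped Classical in
theorem intervalAltSum_eq_mul {S : Finset α} (hS : S.Nonempty) (i j : α) :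
    intervalAltSum S i j = (if (S : Set α).OrdConnected then 1 else 0) *
      ((if ↑(upperClosure (S : Set α)) = Set.Ici i then 1 else 0) -
        (if ↑(upperClosure (S : Set α)) = Set.Ioi i then 1 else 0)) *
      ((if ↑(lowerClosure (S : Set α)) = Set.Iic j then 1 else 0) -
        (if ↑(lowerClosure (S : Set α)) = Set.Iio j then 1 else 0)) := by
  have hS' : (S : Set α).Nonempty := hS
  simp only [intervalAltSum, ← coe_inj, coe_Icc, coe_Ico, coe_Ioc, coe_Ioo, ← Set.Ici_inter_Iic,
    ← Set.Ici_inter_Iio, ← Set.Ioi_inter_Iic, ← Set.Ioi_inter_Iio,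
    hS'.eq_inter_iff (isUpperSet_Ici i) (isLowerSet_Iic j),
    hS'.eq_inter_iff (isUpperSet_Ici i) (isLowerSet_Iio j),
    hS'.eq_inter_iff (isUpperSet_Ioi i) (isLowerSet_Iic j),
    hS'.eq_inter_iff (isUpperSet_Ioi i) (isLowerSet_Iio j)]
  split_ifs <;> simp_all

theorem intervalAltSum_eq_zero_of_lt {S : Finset α} (hS : S.Nonempty) {i j : α} (hji : j < i) :
    intervalAltSum S i j = 0 := by
  simp [intervalAltSum, Icc_eq_empty_of_lt hji, Ico_eq_empty_of_le hji.le,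
    Ioc_eq_empty_of_le hji.le, Ioo_eq_empty_of_le hji.le, hS.ne_empty]

variable [Fintype α] [DecidableEq ι]

def intervalCoeff (ε : α → ι) (c : ι) (S : Finset α) : ℤ :=
  ∑ p : α × α, if ε p.1 = c ∧ ε p.2 = c ∧ p.1 ≤ p.2 then intervalAltSum S p.1 p.2 else 0

open scoped Classical in
theorem intervalCoeff_eq_mul {S : Finset α} (hS : S.Nonempty) (ε : α → ι) (c : ι) :
    intervalCoeff ε c S = (if (S : Set α).OrdConnected then 1 else 0) *
      (startWeight ε c ↑(upperClosure (S : Set α)) *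
        endWeight ε c ↑(lowerClosure (S : Set α))) := by
  have key : ∀ i j : α, (if ε i = c ∧ ε j = c ∧ i ≤ j then intervalAltSum S i j else 0) =
      if ε i = c ∧ ε j = c then intervalAltSum S i j else 0 := by
    intro i j
    rcases le_or_gt i j with hij | hji
    · simp [hij]
    · simp [intervalAltSum_eq_zero_of_lt hS hji]
  rw [intervalCoeff, Fintype.sum_prod_type, startWeight, endWeight, Finset.sum_mul_sum,
    Finset.mul_sum]
  refine Finset.sum_congr rfl fun i _ => ?_
  rw [Finset.mul_sum]
  refine Finset.sum_congr rfl fun j _ => ?_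
  dsimp only
  rw [key, intervalAltSum_eq_mul hS]
  by_cases hi : ε i = c <;> by_cases hj : ε j = c <;> simp [hi, hj]

theorem ite_sub_ite_dvd_intervalCoeff {a b : α} (hab : a ⋖ b) {S : Finset α}
    (hcut : ¬(a ∈ S ↔ b ∈ S)) (ε : α → ι) (c : ι) :
    ((if ε b = c then 1 else 0) - (if ε a = c then 1 else 0) : ℤ) ∣ intervalCoeff ε c S := by
  have hS : S.Nonempty := by
    by_cases ha : a ∈ S
    exacts [⟨a, ha⟩, ⟨b, by tauto⟩]
  rw [intervalCoeff_eq_mul hS]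
  by_cases hconn : (S : Set α).OrdConnected
  swap
  · simp [hconn]
  by_cases ha : a ∈ S
  · rw [hconn.lowerClosure_eq_Iic_of_covBy hab ha (by tauto), endWeight_Iic_of_covBy hab]
    exact dvd_mul_of_dvd_right (dvd_mul_of_dvd_right (dvd_sub_comm.mp dvd_rfl) _) _
  · rw [hconn.upperClosure_eq_Ici_of_covBy hab ha (by tauto), startWeight_Ici_of_covBy hab]
    exact dvd_mul_of_dvd_right (dvd_mul_right _ _) _

end IntervalCoeff

section Chi
variable {n : ℕ} (χ : Fin n → Bool)

theorem map_IccChi (a b : Fin n) :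
    (IccChi χ a b).map (sChi χ).symm.toEmbedding = Icc ((sChi χ).symm a) ((sChi χ).symm b) := by
  ext k
  rw [mem_map_equiv, IccChi, mem_filter, Equiv.symm_symm]
  simp [ltChi, leChi]

theorem map_IcoChi (a b : Fin n) :
    (IcoChi χ a b).map (sChi χ).symm.toEmbedding = Ico ((sChi χ).symm a) ((sChi χ).symm b) := by
  ext k
  rw [mem_map_equiv, IcoChi, mem_filter, Equiv.symm_symm]
  simp [ltChi, leChi]

theorem map_IocChi (a b : Fin n) :
    (IocChi χ a b).map (sChi χ).symm.toEmbedding = Ioc ((sChi χ).symm a) ((sChi χ).symm b) := by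
  ext k
  rw [mem_map_equiv, IocChi, mem_filter, Equiv.symm_symm]
  simp [ltChi, leChi]

theorem map_IooChi (a b : Fin n) :
    (IooChi χ a b).map (sChi χ).symm.toEmbedding = Ioo ((sChi χ).symm a) ((sChi χ).symm b) := by
  ext k
  rw [mem_map_equiv, IooChi, mem_filter, Equiv.symm_symm]
  simp [ltChi]

theorem taurCoeff_eq_intervalCoeff {ι : Type*} [DecidableEq ι] (ε : Fin n → ι) (c : ι)
    (S : Finset (Fin n)) :
    taurCoeff χ ε c S = intervalCoeff (ε ∘ sChi χ) c (S.map (sChi χ).symm.toEmbedding) := by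
  refine Fintype.sum_equiv ((sChi χ).symm.prodCongr (sChi χ).symm) _ _ fun p => ?_
  simp only [intervalAltSum, ← map_IccChi, ← map_IcoChi, ← map_IocChi, ← map_IooChi, map_inj,
    Equiv.prodCongr_apply, Prod.map_fst, Prod.map_snd, Function.comp_apply, Equiv.apply_symm_apply,
    leChi, ltChi, not_lt]

theorem covBy_sChi_symm_iff {a b : Fin n} :
    (sChi χ).symm a ⋖ (sChi χ).symm b ↔ ltChi χ a b ∧ ∀ x, ¬(ltChi χ a x ∧ ltChi χ x b) := by
  refine and_congr Iff.rfl ⟨fun h x hx => h hx.1 hx.2, fun h y hay hyb => ?_⟩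
  exact h (sChi χ y) ⟨by simpa [ltChi] using hay, by simpa [ltChi] using hyb⟩

theorem IsChiInterval.ordConnected_preimage {J : Set (Fin n)} (hJ : IsChiInterval χ J) :
    (sChi χ ⁻¹' J).OrdConnected := by
  refine ⟨fun x hx y hy z ⟨hxz, hzy⟩ => ?_⟩
  rcases hxz.eq_or_lt with rfl | hxz
  · exact hx
  rcases hzy.eq_or_lt with rfl | hzy
  · exact hy
  exact hJ _ _ _ hx hy (by simpa [ltChi]) (by simpa [ltChi])

variable {ι : Type*} [DecidableEq ι] (ε : Fin n → ι) (c : ι) (S : Finset (Fin n))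

theorem ite_sub_ite_dvd_taurCoeff {a b : Fin n} (hab : ltChi χ a b)
    (hcons : ∀ x, ¬(ltChi χ a x ∧ ltChi χ x b)) (hcut : ¬(a ∈ S ↔ b ∈ S)) :
    ((if ε b = c then 1 else 0) - (if ε a = c then 1 else 0) : ℤ) ∣ taurCoeff χ ε c S := by
  rw [taurCoeff_eq_intervalCoeff]
  simpa using ite_sub_ite_dvd_intervalCoeff ((covBy_sChi_symm_iff χ).mpr ⟨hab, hcons⟩)
    (S := S.map (sChi χ).symm.toEmbedding) (by simpa [mem_map_equiv] using hcut) (ε ∘ sChi χ) c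

theorem IsChiInterval.exists_cut {J : Set (Fin n)} (hJ : IsChiInterval χ J) {x y : Fin n}
    (hx : x ∈ J) (hy : y ∈ J) (hxy : ¬(x ∈ S ↔ y ∈ S)) :
    ∃ a ∈ J, ∃ b ∈ J, ltChi χ a b ∧ (∀ z, ¬(ltChi χ a z ∧ ltChi χ z b)) ∧ ¬(a ∈ S ↔ b ∈ S) := by
  obtain ⟨a, ha, b, hb, hab, hcut⟩ := (hJ.ordConnected_preimage χ).exists_covBy_not_iff
    (p := (sChi χ · ∈ S)) (x := (sChi χ).symm x) (y := (sChi χ).symm y)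
    (by simpa using hx) (by simpa using hy) (by simpa using hxy)
  refine ⟨sChi χ a, ha, sChi χ b, hb, ?_⟩
  rw [← and_assoc, ← covBy_sChi_symm_iff, Equiv.symm_apply_apply, Equiv.symm_apply_apply]
  exact ⟨hab, hcut⟩

end Chi

/-- In the formal sum defining `⊤_ι(z₁⋯z_n)`, every term whose tensor splitting cuts
through a maximal `ε`-monochromatic `χ`-interval cancels (part a); a surviving term
puts each cut between two `≺_χ`-consecutive indices of distinct `ε`-colours, exactly
one of which is `ι`-coloured (part b); in particular no maximal `ε`-monochromatic
`χ`-interval is split across the tensor sign of a surviving term (part c). -/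
theorem taur_cancellation {n : ℕ} {ι : Type*} [DecidableEq ι]
    (χ : Fin n → Bool) (ε : Fin n → ι) (c : ι) (S : Finset (Fin n)) :
    ((∃ a b : Fin n, ε a = ε b ∧ ltChi χ a b ∧ (∀ x : Fin n, ¬ (ltChi χ a x ∧ ltChi χ x b)) ∧
        ¬ ((a ∈ S) ↔ (b ∈ S))) → taurCoeff χ ε c S = 0) ∧
    (taurCoeff χ ε c S ≠ 0 →
      (∀ a b : Fin n, ltChi χ a b → (∀ x : Fin n, ¬ (ltChi χ a x ∧ ltChi χ x b)) →
          ¬ ((a ∈ S) ↔ (b ∈ S)) → (ε a ≠ ε b ∧ (ε a = c ∨ ε b = c))) ∧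
      (∀ J : Set (Fin n), IsMaxMono χ ε J → (J ⊆ ↑S ∨ ∀ x ∈ J, x ∉ S))) := by
  have cancel : (∃ a b : Fin n, ε a = ε b ∧ ltChi χ a b ∧
      (∀ x : Fin n, ¬ (ltChi χ a x ∧ ltChi χ x b)) ∧ ¬ ((a ∈ S) ↔ (b ∈ S))) →
      taurCoeff χ ε c S = 0 := by
    rintro ⟨a, b, hε, hab, hcons, hcut⟩
    simpa [hε] using ite_sub_ite_dvd_taurCoeff χ ε c S hab hcons hcut
  refine ⟨cancel, fun hne => ⟨fun a b hab hcons hcut => ?_, fun J hJ => ?_⟩⟩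
  · have hdvd := ite_sub_ite_dvd_taurCoeff χ ε c S hab hcons hcut
    have hfactor : ((if ε b = c then 1 else 0) - (if ε a = c then 1 else 0) : ℤ) ≠ 0 :=
      fun h => hne (zero_dvd_iff.mp (h ▸ hdvd))
    refine ⟨fun h => hfactor (by rw [h, sub_self]), ?_⟩
    by_contra! h
    exact hfactor (by simp [h.1, h.2])
  · obtain ⟨-, hJint, hJmono, -⟩ := hJ
    by_contra! hsplit
    obtain ⟨hsub, x, hxJ, hxS⟩ := hsplit
    obtain ⟨y, hyJ, hyS⟩ := Set.not_subset.mp hsub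
    obtain ⟨a, ha, b, hb, hab, hcons, hcut⟩ := hJint.exists_cut χ S hxJ hyJ (by simp_all)
    exact hne (cancel ⟨a, b, hJmono a ha b hb, hab, hcons, hcut⟩)
end
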